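/- arXiv:2507.15247 — 7 statements merged into one kernel-verified Lean document; each statement's English description precedes it below -/
import Mathlib

section
/- Let q ≥ 2, m ≥ 2, λ | (q-1), 0 ≤ ℓ₁ ≤ m-1, 0 ≤ ℓ₀ < (q-1)/λ, and δ = ((q - λℓ₀)q^(m-1-ℓ₁) - 1)/λ. Then for every integer i with 1 ≤ i ≤ δ-1, the q-weight of λi is strictly less than (q-1)m - (q-1)ℓ₁ - λℓ₀. -/
lemma dsplit (q : ℕ) (e n : ℕ) :
    (∑ j ∈ Finset.range (e+1+1), n / q^j % q)
      = (∑ j ∈ Finset.range (e+1), (n/q) / q^j % q) + n % q := by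
  rw [Finset.sum_range_succ']
  simp only [pow_zero, Nat.div_one]
  congr 1
  apply Finset.sum_congr rfl
  intro j _
  rw [Nat.div_div_eq_div_mul, ← pow_succ']

lemma dsB (q : ℕ) (hq : 2 ≤ q) :
    ∀ e M n : ℕ, n < M * q^e →
      (∑ j ∈ Finset.range (e+1), n / q^j % q) < (q-1)*e + M := by
  intro e
  induction e with
  | zero =>
    intro M n h
    simp only [pow_zero, mul_one] at h
    simp only [zero_add, Finset.sum_range_one, pow_zero, Nat.div_one]
    have := Nat.mod_le n q
    omega
  | succ e ih =>
    intro M n h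
    have hq0 : 0 < q := by omega
    have hdiv : n / q < M * q^e := by
      rw [Nat.div_lt_iff_lt_mul hq0]
      calc n < M * q^(e+1) := h
        _ = M * q^e * q := by ring
    have hS := ih M (n/q) hdiv
    have hmod : n % q < q := Nat.mod_lt _ hq0
    rw [dsplit]
    rw [show (q-1)*(e+1) = (q-1)*e + (q-1) by ring]
    generalize (q-1)*e = E at hS ⊢
    omega

lemma dsA (q : ℕ) (hq : 2 ≤ q) :
    ∀ e M n : ℕ, M ≤ q → n + 1 < M * q^e →
      (∑ j ∈ Finset.range (e+1), n / q^j % q) + 1 < (q-1)*e + M := by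
  intro e
  induction e with
  | zero =>
    intro M n hMq h
    simp only [pow_zero, mul_one] at h
    simp only [zero_add, Finset.sum_range_one, pow_zero, Nat.div_one]
    rw [Nat.mod_eq_of_lt (by omega : n < q)]
    omega
  | succ e ih =>
    intro M n hMq h
    have hq0 : 0 < q := by omega
    rw [dsplit]
    rcases Nat.lt_or_ge (n % q + 1) q with hc | hc
    · have hdiv : n / q < M * q^e := by
        rw [Nat.div_lt_iff_lt_mul hq0]
        calc n < M * q^(e+1) := by omega
          _ = M * q^e * q := by ring
      have hS := dsB q hq e M (n/q) hdiv
      rw [show (q-1)*(e+1) = (q-1)*e + (q-1) by ring]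
      generalize (q-1)*e = E at hS ⊢
      omega
    · have hmod : n % q < q := Nat.mod_lt _ hq0
      have hmodeq : n % q = q - 1 := by omega
      have hdm := Nat.div_add_mod n q
      have hstep : n / q + 1 < M * q^e := by
        have h2 : q * (n/q + 1) < q * (M * q^e) := by
          rw [show q * (n/q + 1) = q * (n/q) + q by ring,
              show q * (M * q^e) = M * q^(e+1) by ring]
          generalize q * (n/q) = W at hdm
          generalize M * q^(e+1) = B at h
          omega
        exact Nat.lt_of_mul_lt_mul_left h2
      have hS := ih M (n/q) hMq hstep
      rw [show (q-1)*(e+1) = (q-1)*e + (q-1) by ring]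
      generalize (q-1)*e = E at hS ⊢
      omega

/-- for 1 ≤ i ≤ δ-1, wt_q(λ i) < (q-1)m - (q-1)ℓ₁ - λℓ₀. -/
theorem stmt1 (q m lam l0 l1 δ : ℕ)
    (hq : 2 ≤ q) (hm : 2 ≤ m) (hlam : lam ∣ q - 1) (hl1 : l1 ≤ m - 1)
    (hl0 : l0 < (q - 1) / lam)
    (hδ : lam * δ = (q - lam * l0) * q ^ (m - 1 - l1) - 1)
    (hδ2 : 2 ≤ δ) :
    ∀ i : ℕ, 1 ≤ i → i ≤ δ - 1 →
      (∑ j ∈ Finset.range m, lam * i / q ^ j % q) <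
        (q - 1) * m - (q - 1) * l1 - lam * l0 := by
  intro i hi1 hi2
  have hlam1 : 1 ≤ lam := by
    rcases Nat.eq_zero_or_pos lam with h | h
    · subst h; simp at hl0
    · exact h
  have hZ : lam * l0 + lam ≤ q - 1 := by
    have h1 : lam * (l0 + 1) ≤ lam * ((q-1)/lam) :=
      Nat.mul_le_mul_left _ (by omega)
    rw [Nat.mul_div_cancel' hlam] at h1
    calc lam * l0 + lam = lam * (l0+1) := by ring
      _ ≤ q - 1 := h1
  set e := m - 1 - l1 with he
  have hMq : q - lam * l0 ≤ q := Nat.sub_le _ _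
  have hle : e + 1 ≤ m := by omega
  -- key bound on n = lam * i
  have hn1 : lam * i + 1 < (q - lam * l0) * q ^ e := by
    have h1 : lam * (i+1) ≤ lam * δ := Nat.mul_le_mul_left _ (by omega)
    rw [Nat.mul_add, Nat.mul_one] at h1
    have h2 : (1:ℕ)*2 ≤ lam * δ := Nat.mul_le_mul hlam1 hδ2
    generalize hA : (q - lam * l0) * q ^ e = A at hδ ⊢
    generalize lam * δ = P at hδ h1 h2
    generalize lam * i = n at h1 ⊢
    omega
  have hS := dsA q hq e (q - lam * l0) (lam * i) hMq hn1
  have hqe1 : (q - lam * l0) * q ^ e ≤ q ^ (e+1) := by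
    calc (q - lam * l0) * q ^ e ≤ q * q ^ e := Nat.mul_le_mul_right _ hMq
      _ = q ^ (e+1) := (pow_succ' q e).symm
  have hsum_eq : (∑ j ∈ Finset.range m, lam * i / q ^ j % q)
      = ∑ j ∈ Finset.range (e+1), lam * i / q ^ j % q := by
    refine (Finset.sum_subset (Finset.range_subset_range.mpr hle) ?_).symm
    intro j hjm hj
    have hj2 : e + 1 ≤ j := by
      simp only [Finset.mem_range] at hj
      omega
    have hlt : lam * i < q ^ j := by
      calc lam * i < (q - lam * l0) * q ^ e := by omega
        _ ≤ q ^ (e+1) := hqe1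
        _ ≤ q ^ j := Nat.pow_le_pow_right (by omega) hj2
    rw [Nat.div_eq_of_lt hlt]
    simp
  rw [hsum_eq]
  have hE1 : (q-1)*m = (q-1)*l1 + (q-1)*e + (q-1) := by
    have hm1 : m = l1 + e + 1 := by omega
    rw [hm1]; ring
  generalize (q-1)*l1 = Y at hE1 ⊢
  generalize (q-1)*e = E at hE1 hS
  generalize (q-1)*m = X at hE1 ⊢
  generalize lam * l0 = Z at hZ hS ⊢
  omega
end

section
/- Let q be a prime power, m ≥ 2, N = q^m - 1. If 1 ≤ i ≤ q^(⌊(m+1)/2⌋) - 1 and i is not divisible by q, then i is the smallest element of its q-cyclotomic coset modulo N, and the coset C_i = { i·q^j mod N : 0 ≤ j ≤ m-1 } has exactly m elements. -/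
/-- every 1 ≤ i ≤ q^(⌊(m+1)/2⌋)-1 with q ∤ i is a q-cyclotomic
coset leader modulo N = q^m - 1, and its coset has m elements. -/
theorem stmt6 (q m i : ℕ)
    (hq : ∃ p k : ℕ, p.Prime ∧ 0 < k ∧ q = p ^ k)
    (hm : 2 ≤ m) (hi1 : 1 ≤ i) (hi2 : i ≤ q ^ ((m + 1) / 2) - 1)
    (hqi : ¬ q ∣ i) :
    (∀ j, i ≤ i * q ^ j % (q ^ m - 1)) ∧
      ((Finset.range m).image fun j => i * q ^ j % (q ^ m - 1)).card = m := by
  have hq2 : 2 ≤ q := by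
    obtain ⟨p, k, hp, hk, rfl⟩ := hq
    calc 2 ≤ p := hp.two_le
    _ ≤ p ^ k := Nat.le_self_pow hk.ne' p
  set t := (m + 1) / 2 with ht
  have hq1 : 1 ≤ q := by omega
  have hpow : ∀ s : ℕ, 1 ≤ q ^ s := fun s => Nat.one_le_pow s q (by omega)
  have hmono : ∀ a b : ℕ, a ≤ b → q ^ a ≤ q ^ b :=
    fun a b h => Nat.pow_le_pow_right hq1 h
  have hi_lt : i < q ^ t := by have := hpow t; omega
  have hNpos : 1 ≤ q ^ m - 1 := by
    have h1 : q ^ 2 ≤ q ^ m := hmono 2 m hm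
    have : 4 ≤ q ^ 2 := by nlinarith
    omega
  -- the value of i * q^j % N for j < m
  have hval : ∀ j, j < m →
      i * q ^ j % (q ^ m - 1) = i / q ^ (m - j) + (i % q ^ (m - j)) * q ^ j ∧
      i / q ^ (m - j) + (i % q ^ (m - j)) * q ^ j < q ^ m - 1 := by
    intro j hj
    have hqmj : 0 < q ^ (m - j) := hpow (m - j)
    have hib := Nat.div_add_mod i (q ^ (m - j))
    set a := i / q ^ (m - j) with ha
    set b := i % q ^ (m - j) with hb
    have hbq : b < q ^ (m - j) := Nat.mod_lt _ hqmj
    have hsplit : q ^ (m - j) * q ^ j = q ^ m := by rw [← pow_add]; congr 1; omega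
    have him1 : i < q ^ (m - 1) := lt_of_lt_of_le hi_lt (hmono t (m - 1) (by omega))
    have hxlt : a + b * q ^ j < q ^ m - 1 := by
      rcases Nat.eq_zero_or_pos j with rfl | hj1
      · have hmm : m - 0 = m := by omega
        have him : i < q ^ m := lt_of_lt_of_le him1 (hmono (m - 1) m (by omega))
        have ha0 : a = 0 := by rw [ha, hmm]; exact Nat.div_eq_of_lt him
        have hbi : b = i := by rw [hb, hmm]; exact Nat.mod_eq_of_lt him
        have h2 : 2 * q ^ (m - 1) ≤ q ^ m := by
          calc 2 * q ^ (m - 1) ≤ q * q ^ (m - 1) := Nat.mul_le_mul_right _ hq2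
          _ = q ^ m := by rw [← pow_succ']; congr 1; omega
        have h3 := hpow (m - 1)
        rw [ha0, hbi]
        simp only [pow_zero, mul_one, zero_add]
        omega
      · have haA : a < q ^ (j - 1) := by
          have h1 : a * q ^ (m - j) < q ^ (j - 1) * q ^ (m - j) := by
            have heq : q ^ (j - 1) * q ^ (m - j) = q ^ (m - 1) := by
              rw [← pow_add]; congr 1; omega
            calc a * q ^ (m - j) ≤ i := Nat.div_mul_le_self i _
            _ < q ^ (m - 1) := him1
            _ = q ^ (j - 1) * q ^ (m - j) := heq.symm
          exact Nat.lt_of_mul_lt_mul_right h1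
        have h2A : 2 * q ^ (j - 1) ≤ q ^ j := by
          calc 2 * q ^ (j - 1) ≤ q * q ^ (j - 1) := Nat.mul_le_mul_right _ hq2
          _ = q ^ j := by rw [← pow_succ']; congr 1; omega
        have hchain : a + b * q ^ j + 2 ≤ q ^ m := by
          have h3 : 1 ≤ q ^ (j - 1) := hpow (j - 1)
          calc a + b * q ^ j + 2 ≤ q ^ j + b * q ^ j := by linarith
          _ = (b + 1) * q ^ j := by ring
          _ ≤ q ^ (m - j) * q ^ j := Nat.mul_le_mul_right _ hbq
          _ = q ^ m := hsplit
        exact Nat.lt_sub_of_add_lt (by linarith)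
    have hxeq : i * q ^ j = (a + b * q ^ j) + a * (q ^ m - 1) := by
      obtain ⟨P, hP⟩ : ∃ P, q ^ m = P + 1 := ⟨q ^ m - 1, by have := hpow m; omega⟩
      calc i * q ^ j = (q ^ (m - j) * a + b) * q ^ j := by rw [hib]
      _ = a * (q ^ (m - j) * q ^ j) + b * q ^ j := by ring
      _ = a * q ^ m + b * q ^ j := by rw [hsplit]
      _ = (a + b * q ^ j) + a * (q ^ m - 1) := by
          rw [hP, Nat.add_sub_cancel]; ring
    refine ⟨?_, hxlt⟩
    rw [hxeq, Nat.add_mul_mod_self_right, Nat.mod_eq_of_lt hxlt]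
  constructor
  · -- coset leader
    intro j
    have hred : i * q ^ j % (q ^ m - 1) = i * q ^ (j % m) % (q ^ m - 1) := by
      have h1 : q ^ m ≡ 1 [MOD q ^ m - 1] := by
        have hp1 : 1 ≤ q ^ m := hpow m
        exact ((Nat.modEq_iff_dvd' hp1).mpr dvd_rfl).symm
      have h2 : q ^ j ≡ q ^ (j % m) [MOD q ^ m - 1] := by
        conv_lhs => rw [show j = j % m + m * (j / m) from (Nat.mod_add_div j m).symm]
        rw [pow_add, pow_mul]
        have h3 := (h1.pow (j / m)).mul_left (q ^ (j % m))
        simpa using h3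
      exact h2.mul_left i
    rw [hred]
    have hjm : j % m < m := Nat.mod_lt _ (by omega)
    obtain ⟨heq, _⟩ := hval (j % m) hjm
    rw [heq]
    by_cases hcase : t ≤ m - j % m
    · have hlt2 : i < q ^ (m - j % m) := lt_of_lt_of_le hi_lt (hmono t _ hcase)
      have ha0 : i / q ^ (m - j % m) = 0 := Nat.div_eq_of_lt hlt2
      have hbi : i % q ^ (m - j % m) = i := Nat.mod_eq_of_lt hlt2
      rw [ha0, hbi, zero_add]
      exact Nat.le_mul_of_pos_right i (hpow (j % m))
    · have hj't : t ≤ j % m := by omega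
      have hb1 : 1 ≤ i % q ^ (m - j % m) := by
        rcases Nat.eq_zero_or_pos (i % q ^ (m - j % m)) with h0 | h
        · exact absurd ((dvd_pow_self q (by omega : m - j % m ≠ 0)).trans
            (Nat.dvd_of_mod_eq_zero h0)) hqi
        · exact h
      calc i ≤ q ^ t := le_of_lt hi_lt
      _ ≤ q ^ (j % m) := hmono t _ hj't
      _ ≤ (i % q ^ (m - j % m)) * q ^ (j % m) := Nat.le_mul_of_pos_left _ hb1
      _ ≤ i / q ^ (m - j % m) + (i % q ^ (m - j % m)) * q ^ (j % m) :=
          Nat.le_add_left _ _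
  · -- coset size m
    have key : ∀ j k, j < k → k < m →
        i * q ^ j % (q ^ m - 1) ≠ i * q ^ k % (q ^ m - 1) := by
      intro j k hjk hkm hEq
      set d := k - j with hd
      have hd1 : 1 ≤ d := by omega
      have hdm : d ≤ m - 1 := by omega
      obtain ⟨D, hD⟩ : ∃ D, q ^ d = D + 1 := ⟨q ^ d - 1, by have := hpow d; omega⟩
      obtain ⟨E, hE⟩ : ∃ E, q ^ (m - d) = E + 1 :=
        ⟨q ^ (m - d) - 1, by have := hpow (m - d); omega⟩
      have hk' : q ^ k = q ^ j * (D + 1) := by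
        rw [← hD, ← pow_add]; congr 1; omega
      -- first divisibility: N ∣ q^j * (i * D)
      have hdvd : (q ^ m - 1) ∣ q ^ j * (i * D) := by
        have h2 : i * q ^ j ≤ i * q ^ k :=
          Nat.mul_le_mul_left _ (hmono j k (le_of_lt hjk))
        have h3 := (Nat.modEq_iff_dvd' h2).mp hEq
        have h4 : i * q ^ k - i * q ^ j = q ^ j * (i * D) := by
          apply Nat.sub_eq_of_eq_add
          rw [hk']; ring
        rwa [h4] at h3
      -- coprimality
      have hcop : Nat.Coprime (q ^ m - 1) (q ^ j) := by
        apply Nat.Coprime.pow_right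
        have h1 : Nat.Coprime (q ^ m) (q ^ m - 1) := by
          obtain ⟨P, hP⟩ : ∃ P, q ^ m = P + 1 := ⟨q ^ m - 1, by have := hpow m; omega⟩
          rw [hP]; simp
        exact (Nat.Coprime.coprime_dvd_left (dvd_pow_self q (by omega : m ≠ 0)) h1).symm
      have hdvd2 : (q ^ m - 1) ∣ i * D := hcop.dvd_of_dvd_mul_left hdvd
      -- second divisibility: N ∣ i * E
      have hqm' : q ^ m = (E + 1) * (D + 1) := by
        rw [← hD, ← hE, ← pow_add]; congr 1; omega
      have hid : i * (q ^ m - 1) = q ^ (m - d) * (i * D) + i * E := by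
        rw [hqm', hE]
        have h5 : (E + 1) * (D + 1) = E * D + E + D + 1 := by ring
        rw [h5, Nat.add_sub_cancel]; ring
      have hdvd3 : (q ^ m - 1) ∣ i * E := by
        have hA : (q ^ m - 1) ∣ q ^ (m - d) * (i * D) := hdvd2.mul_left _
        have hB : (q ^ m - 1) ∣ i * (q ^ m - 1) := dvd_mul_left _ _
        have h6 := Nat.dvd_sub hB hA
        rwa [hid, Nat.add_sub_cancel_left] at h6
      -- combine on e = min d (m - d)
      set e := min d (m - d) with he
      have hedvd : (q ^ m - 1) ∣ i * (q ^ e - 1) := by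
        rcases le_total d (m - d) with h | h
        · have : q ^ e - 1 = D := by rw [he, min_eq_left h]; omega
          rw [this]; exact hdvd2
        · have : q ^ e - 1 = E := by rw [he, min_eq_right h]; omega
          rw [this]; exact hdvd3
      have he1 : 1 ≤ e := by omega
      have hqe2 : 2 ≤ q ^ e := by
        calc 2 ≤ q := hq2
        _ = q ^ 1 := (pow_one q).symm
        _ ≤ q ^ e := hmono 1 e he1
      have hpos : 0 < i * (q ^ e - 1) := Nat.mul_pos (by omega) (by omega)
      have hemt : e ≤ m - t := by omega
      have hle : i * (q ^ e - 1) ≤ (q ^ t - 1) * (q ^ (m - t) - 1) := by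
        apply Nat.mul_le_mul hi2
        have := hmono e (m - t) hemt
        omega
      have hfin : (q ^ t - 1) * (q ^ (m - t) - 1) < q ^ m - 1 := by
        obtain ⟨A, hA⟩ : ∃ A, q ^ t = A + 2 :=
          ⟨q ^ t - 2, by have h7 : q ^ 1 ≤ q ^ t := hmono 1 t (by omega); simp at h7; omega⟩
        obtain ⟨B, hB⟩ : ∃ B, q ^ (m - t) = B + 2 :=
          ⟨q ^ (m - t) - 2, by
            have h7 : q ^ 1 ≤ q ^ (m - t) := hmono 1 (m - t) (by omega)
            simp at h7; omega⟩
        have hq' : q ^ m = (A + 2) * (B + 2) := by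
          rw [← hA, ← hB, ← pow_add]; congr 1; omega
        rw [hA, hB, hq']
        have hred1 : A + 2 - 1 = A + 1 := by omega
        have hred2 : B + 2 - 1 = B + 1 := by omega
        rw [hred1, hred2]
        have h2 : (A + 1) * (B + 1) + 1 < (A + 2) * (B + 2) := by
          have hx : (A + 2) * (B + 2) = (A + 1) * (B + 1) + (A + B + 3) := by ring
          rw [hx]
          exact Nat.add_lt_add_left (by omega) _
        exact Nat.lt_sub_of_add_lt h2
      have hge := Nat.le_of_dvd hpos hedvd
      exact absurd (lt_of_le_of_lt (hge.trans hle) hfin) (lt_irrefl _)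
    have hinj : Set.InjOn (fun j => i * q ^ j % (q ^ m - 1)) (Finset.range m) := by
      intro x hx y hy hxy
      simp only [Finset.coe_range, Set.mem_Iio] at hx hy
      by_contra hne
      rcases Nat.lt_or_ge x y with h | h
      · exact key x y h hy hxy
      · exact key y x (by omega) hx hxy.symm
    rw [Finset.card_image_of_injOn hinj, Finset.card_range]
end

section
/- Let q ≥ 2, m ≥ 1, λ ≥ 1 with λ | q^m - 1, and n = (q^m - 1)/λ. For any integer i with 0 ≤ i ≤ n-1: i is the smallest element of its q-cyclotomic coset modulo n if and only if λi is the smallest element of its q-cyclotomic coset modulo q^m - 1; moreover the two cosets have the same cardinality. -/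
/-- i is a coset leader modulo n = (q^m-1)/λ iff λi is a coset
leader modulo q^m - 1, and the two cosets have the same size. -/
theorem stmt7 (q m lam : ℕ) (hq : 2 ≤ q) (hm : 1 ≤ m)
    (hlam1 : 1 ≤ lam) (hlam : lam ∣ q - 1) :
    ∀ i : ℕ, i ≤ (q ^ m - 1) / lam - 1 →
      ((∀ j, i ≤ i * q ^ j % ((q ^ m - 1) / lam)) ↔
        (∀ j, lam * i ≤ lam * i * q ^ j % (q ^ m - 1))) ∧
      ((Finset.range m).image fun j => i * q ^ j % ((q ^ m - 1) / lam)).card =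
        ((Finset.range m).image fun j => lam * i * q ^ j % (q ^ m - 1)).card := by
  intro i _
  have hlampos : 0 < lam := hlam1
  have hdvd : lam ∣ q ^ m - 1 :=
    hlam.trans (by simpa using Nat.sub_dvd_pow_sub_pow q 1 m)
  have hNn : q ^ m - 1 = lam * ((q ^ m - 1) / lam) := (Nat.mul_div_cancel' hdvd).symm
  have key : ∀ j, lam * i * q ^ j % (q ^ m - 1)
      = lam * (i * q ^ j % ((q ^ m - 1) / lam)) := by
    intro j
    rw [hNn, mul_assoc, Nat.mul_mod_mul_left, Nat.mul_div_cancel_left _ hlampos]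
  constructor
  · constructor
    · intro h j
      rw [key j]
      exact Nat.mul_le_mul_left lam (h j)
    · intro h j
      have := h j
      rw [key j] at this
      exact Nat.le_of_mul_le_mul_left this hlampos
  · have : ((Finset.range m).image fun j => lam * i * q ^ j % (q ^ m - 1))
        = ((Finset.range m).image fun j => i * q ^ j % ((q ^ m - 1) / lam)).image
          (fun x => lam * x) := by
      rw [Finset.image_image]
      exact Finset.image_congr (by intro j _; exact key j)
    rw [this, Finset.card_image_of_injective _
      (fun a b hab => Nat.eq_of_mul_eq_mul_left hlampos hab)]
end

section
/- Let q ≥ 2, m ≥ 2, λ | (q-1), and let δ = ((q - λℓ₀)q^(m-1-ℓ₁) - 1)/λ with either 1 ≤ ℓ₁ ≤ m-1, or ℓ₁ = 0 and 0 < ℓ₀ < (q-1)/λ. Then the q-cyclotomic coset of λδ modulo N = q^m - 1 has exactly m elements, and λδ is its coset leader (i.e., λδ·q^j mod N > λδ for all 1 ≤ j ≤ m-1). -/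
lemma aux_ineq (q m c s : ℕ) (hq : 2 ≤ q) (hm : 2 ≤ m) (hs : s ≤ m - 1)
    (hc2 : 2 ≤ c) (hcq : c ≤ q)
    (hub : c * q ^ s ≤ (q - 1) * q ^ (m - 1)) :
    ∀ j, 1 ≤ j → j ≤ m - 1 →
      c * q ^ s - 1 < (c * q ^ s - 1) * q ^ j % (q ^ m - 1) := by
  intro j hj1 hj2
  have hq0 : 0 < q := by omega
  have hps : 0 < q ^ s := pow_pos hq0 s
  have hpm : 0 < q ^ m := pow_pos hq0 m
  have hpj : 0 < q ^ j := pow_pos hq0 j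
  have hcs2 : 2 ≤ c * q ^ s := le_trans hc2 (Nat.le_mul_of_pos_right _ hps)
  set x := c * q ^ s - 1 with hxdef
  have hx1 : x + 1 = c * q ^ s := by omega
  have hx0 : 0 < x := by omega
  set k := m - j with hk
  have hk1 : 1 ≤ k := by omega
  have hkm : k ≤ m - 1 := by omega
  have hkj : k + j = m := by omega
  have hQ : q ^ k * q ^ j = q ^ m := by rw [← pow_add, hkj]
  have hqj2 : 2 ≤ q ^ j := by
    calc 2 ≤ q := hq
    _ = q ^ 1 := (pow_one q).symm
    _ ≤ q ^ j := Nat.pow_le_pow_right hq0 hj1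
  have hpk1 : 1 ≤ q ^ k := pow_pos hq0 k
  -- split on (q-1)*q^(m-1) + q^(m-1) = q^m
  have hsplitm : (q - 1) * q ^ (m - 1) + q ^ (m - 1) = q ^ m := by
    have h1 : (q - 1) * q ^ (m - 1) + q ^ (m - 1) = ((q - 1) + 1) * q ^ (m - 1) := by ring
    rw [h1]
    have h2 : (q - 1) + 1 = q := by omega
    rw [h2, ← pow_succ']
    congr 1
    omega
  have hjm1 : q ^ j ≤ q ^ (m - 1) := Nat.pow_le_pow_right hq0 hj2
  by_cases hcase : k ≤ s
  · -- case B : low digits of x are all q-1 at positions 0..k-1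
    have hsk : q ^ (s - k) * q ^ k = q ^ s := by
      rw [← pow_add]; congr 1; omega
    have hpsk : 0 < q ^ (s - k) := pow_pos hq0 (s - k)
    have ha2 : 1 ≤ c * q ^ (s - k) := Nat.one_le_iff_ne_zero.mpr (by positivity)
    set a := c * q ^ (s - k) - 1 with hadef
    have ha1 : a + 1 = c * q ^ (s - k) := by omega
    have hdec : x + 1 = (a + 1) * q ^ k := by
      rw [hx1, ha1, mul_assoc, hsk]
    set v := (q ^ k - 1) * q ^ j + a with hvdef
    have E1 : x * q ^ j + q ^ j = (a + 1) * q ^ m := by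
      have h := congrArg (fun t => t * q ^ j) hdec
      calc x * q ^ j + q ^ j = (x + 1) * q ^ j := by ring
      _ = (a + 1) * q ^ k * q ^ j := h
      _ = (a + 1) * q ^ m := by rw [mul_assoc, hQ]
    have E2 : v + q ^ j = q ^ m + a := by
      have h1 : (q ^ k - 1) * q ^ j + q ^ j = q ^ k * q ^ j := by
        have h2 : (q ^ k - 1) * q ^ j + q ^ j = ((q ^ k - 1) + 1) * q ^ j := by ring
        rw [h2]; congr 1; omega
      rw [hQ] at h1
      omega
    have h3 : a * q ^ m = a * (q ^ m - 1) + a := by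
      have h4 : a * (q ^ m - 1) + a = a * ((q ^ m - 1) + 1) := by ring
      rw [h4]; congr 1; omega
    have h5 : (a + 1) * q ^ m = a * q ^ m + q ^ m := by ring
    have heq : x * q ^ j = a * (q ^ m - 1) + v := by omega
    have hmod : x * q ^ j % (q ^ m - 1) = v % (q ^ m - 1) := by
      rw [heq, add_comm, Nat.add_mul_mod_self_right]
    -- bound a + 2 ≤ q^j
    have hub' : c * q ^ (s - k) ≤ (q - 1) * q ^ (m - 1 - k) := by
      have hmk : q ^ (m - 1 - k) * q ^ k = q ^ (m - 1) := by
        rw [← pow_add]; congr 1; omega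
      have h1 : c * q ^ (s - k) * q ^ k ≤ (q - 1) * q ^ (m - 1 - k) * q ^ k := by
        rw [mul_assoc, mul_assoc, hsk, hmk]; exact hub
      exact Nat.le_of_mul_le_mul_right h1 (pow_pos hq0 k)
    have hsplitj : (q - 1) * q ^ (m - 1 - k) + q ^ (m - 1 - k) = q ^ j := by
      have h1 : (q - 1) * q ^ (m - 1 - k) + q ^ (m - 1 - k)
          = ((q - 1) + 1) * q ^ (m - 1 - k) := by ring
      rw [h1]
      have h2 : (q - 1) + 1 = q := by omega
      rw [h2, ← pow_succ']
      congr 1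
      omega
    have hpk2 : 0 < q ^ (m - 1 - k) := pow_pos hq0 (m - 1 - k)
    have haq : a + 2 ≤ q ^ j := by omega
    have hvlt : v < q ^ m - 1 := by omega
    rw [hmod, Nat.mod_eq_of_lt hvlt]
    -- x < v
    omega
  · -- case A : x < q^k, so x * q^j is already reduced
    push_neg at hcase
    have hxk : x + 1 ≤ q ^ k := by
      calc x + 1 = c * q ^ s := hx1
      _ ≤ q * q ^ s := Nat.mul_le_mul_right _ hcq
      _ = q ^ (s + 1) := (pow_succ' q s).symm
      _ ≤ q ^ k := Nat.pow_le_pow_right hq0 (by omega)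
    have h1 : (q ^ k - 1) * q ^ j + q ^ j = q ^ m := by
      have h2 : (q ^ k - 1) * q ^ j + q ^ j = ((q ^ k - 1) + 1) * q ^ j := by ring
      rw [h2]
      have h3 : (q ^ k - 1) + 1 = q ^ k := by omega
      rw [h3, hQ]
    have hxj : x * q ^ j ≤ (q ^ k - 1) * q ^ j := Nat.mul_le_mul_right _ (by omega)
    have hlt : x * q ^ j < q ^ m - 1 := by omega
    rw [Nat.mod_eq_of_lt hlt]
    calc x = x * 1 := (mul_one x).symm
    _ < x * q ^ j := (mul_lt_mul_iff_right₀ hx0).mpr (by omega)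

/-- the q-cyclotomic coset of λδ modulo N = q^m - 1 has m
elements and λδ is its coset leader. -/
theorem stmt8 (q m lam l0 l1 δ : ℕ)
    (hq : 2 ≤ q) (hm : 2 ≤ m) (hlam1 : 1 ≤ lam) (hlam : lam ∣ q - 1)
    (hl0 : l0 < (q - 1) / lam) (hl1 : l1 ≤ m - 1)
    (hδ : lam * δ = (q - lam * l0) * q ^ (m - 1 - l1) - 1) (hδ2 : 2 ≤ δ)
    (hcase : 1 ≤ l1 ∨ (l1 = 0 ∧ 0 < l0)) :
    ((Finset.range m).image fun j => lam * δ * q ^ j % (q ^ m - 1)).card = m ∧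
      ∀ j, 1 ≤ j → j ≤ m - 1 → lam * δ < lam * δ * q ^ j % (q ^ m - 1) := by
  have hq0 : 0 < q := by omega
  set c := q - lam * l0 with hcdef
  set s := m - 1 - l1 with hsdef
  have hdiv : lam * ((q - 1) / lam) = q - 1 := Nat.mul_div_cancel' hlam
  have hll : lam * l0 + lam ≤ q - 1 := by
    have h2 : lam * (l0 + 1) ≤ lam * ((q - 1) / lam) := Nat.mul_le_mul_left _ (by omega)
    have h3 : lam * (l0 + 1) = lam * l0 + lam := by ring
    omega
  have hc2 : 2 ≤ c := by omega
  have hcq : c ≤ q := Nat.sub_le _ _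
  have hs : s ≤ m - 1 := by omega
  have hub : c * q ^ s ≤ (q - 1) * q ^ (m - 1) := by
    rcases hcase with h | ⟨h0, h1⟩
    · have hsm : s + 1 ≤ m - 1 := by omega
      calc c * q ^ s ≤ q * q ^ s := Nat.mul_le_mul_right _ hcq
      _ = q ^ (s + 1) := (pow_succ' q s).symm
      _ ≤ q ^ (m - 1) := Nat.pow_le_pow_right hq0 hsm
      _ ≤ (q - 1) * q ^ (m - 1) := Nat.le_mul_of_pos_left _ (by omega)
    · have hA : 1 ≤ lam * l0 := Nat.one_le_iff_ne_zero.mpr (by positivity)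
      have hcq1 : c ≤ q - 1 := by omega
      have hsm : s = m - 1 := by omega
      rw [hsm]
      exact Nat.mul_le_mul_right _ hcq1
  have key := aux_ineq q m c s hq hm hs hc2 hcq hub
  have part2 : ∀ j, 1 ≤ j → j ≤ m - 1 → lam * δ < lam * δ * q ^ j % (q ^ m - 1) := by
    intro j h1 h2
    rw [hδ]
    exact key j h1 h2
  refine ⟨?_, part2⟩
  -- cardinality
  have hpm : 0 < q ^ m := pow_pos hq0 m
  have hps : 0 < q ^ s := pow_pos hq0 s
  have hcs2 : 2 ≤ c * q ^ s := le_trans hc2 (Nat.le_mul_of_pos_right _ hps)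
  have hsplitm : (q - 1) * q ^ (m - 1) + q ^ (m - 1) = q ^ m := by
    have h1 : (q - 1) * q ^ (m - 1) + q ^ (m - 1) = ((q - 1) + 1) * q ^ (m - 1) := by ring
    rw [h1]
    have h2 : (q - 1) + 1 = q := by omega
    rw [h2, ← pow_succ']
    congr 1
    omega
  have hpm1 : 0 < q ^ (m - 1) := pow_pos hq0 (m - 1)
  have hxltN : lam * δ < q ^ m - 1 := by
    rw [hδ]
    omega
  set N := q ^ m - 1 with hN
  have hmod1 : q ^ m ≡ 1 [MOD N] := by
    show q ^ m % N = 1 % N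
    have hNq : N + 1 = q ^ m := by omega
    rw [← hNq]
    exact Nat.add_mod_left N 1
  have keyinj : ∀ i j : ℕ, i < j → j < m →
      lam * δ * q ^ i % N = lam * δ * q ^ j % N → False := by
    intro i j hij hjm hfe
    set t := j - i with ht
    have ht1 : 1 ≤ t := by omega
    have ht2 : t ≤ m - 1 := by omega
    have h0 : lam * δ * q ^ i ≡ lam * δ * q ^ j [MOD N] := hfe
    have h1 : lam * δ * q ^ i * q ^ (m - i) ≡ lam * δ * q ^ j * q ^ (m - i) [MOD N] :=
      h0.mul_right _
    have e1 : lam * δ * q ^ i * q ^ (m - i) = lam * δ * q ^ m := by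
      have h : i + (m - i) = m := by omega
      rw [mul_assoc, ← pow_add, h]
    have e2 : lam * δ * q ^ j * q ^ (m - i) = lam * δ * q ^ t * q ^ m := by
      have h : j + (m - i) = t + m := by omega
      rw [mul_assoc, ← pow_add, h, pow_add, ← mul_assoc]
    rw [e1, e2] at h1
    have h2 : lam * δ * q ^ m ≡ lam * δ [MOD N] := by
      calc lam * δ * q ^ m ≡ lam * δ * 1 [MOD N] := hmod1.mul_left _
      _ = lam * δ := mul_one _
    have h3 : lam * δ * q ^ t * q ^ m ≡ lam * δ * q ^ t [MOD N] := by
      calc lam * δ * q ^ t * q ^ m ≡ lam * δ * q ^ t * 1 [MOD N] := hmod1.mul_left _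
      _ = lam * δ * q ^ t := mul_one _
    have h4 : lam * δ ≡ lam * δ * q ^ t [MOD N] :=
      (h2.symm.trans h1).trans h3
    have h5 : lam * δ % N = lam * δ * q ^ t % N := h4
    have h6 : lam * δ % N = lam * δ := Nat.mod_eq_of_lt hxltN
    have h7 := part2 t ht1 ht2
    rw [← h5, h6] at h7
    exact lt_irrefl _ h7
  rw [Finset.card_image_of_injOn, Finset.card_range]
  intro i hi j hj hfe
  simp only [Finset.coe_range, Set.mem_Iio] at hi hj
  by_contra hne
  rcases lt_trichotomy i j with h | h | h
  · exact keyinj i j h hj hfe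
  · exact hne h
  · exact keyinj j i h hi hfe.symm
end

section
/- Let q ≥ 2, m ≥ 2, λ | (q-1), and 0 ≤ ℓ ≤ m-2. Define S_{ℓ,λ} = { 1 ≤ i ≤ q^m - 1 : λ | i and the maximal circular zero-run of the base-q, length-m digit vector of i is ≤ ℓ }. Then |S_{ℓ,λ}| = |S_{ℓ,1}| / λ. -/
namespace Stmt13

def dig (q i t : ℕ) : ℕ := i / q ^ t % q

def widx (m j t : ℕ) : ℕ := if t < j then m - j + t else t - j

def pat (q m l i : ℕ) : Prop :=
  ∀ j < m, ∃ t, m - l - 1 ≤ t ∧ t < m ∧ dig q i (widx m j t) ≠ 0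

lemma dig_low {q p t : ℕ} (hq : 0 < q) (ht : t < p) (c r : ℕ) :
    dig q (q ^ p * c + r) t = dig q r t := by
  have h1 : q ^ p * c = q ^ t * (q ^ (p - t) * c) := by
    rw [← mul_assoc, ← pow_add]
    congr 2
    omega
  have h2 : q ^ (p - t) * c = q * (q ^ (p - t - 1) * c) := by
    rw [← mul_assoc]
    congr 1
    rw [← pow_succ']
    congr 1
    omega
  unfold dig
  rw [h1, Nat.mul_add_div (by positivity), h2, Nat.mul_add_mod]

lemma dig_mod_pow {q p t : ℕ} (hq : 0 < q) (ht : t < p) (i : ℕ) :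
    dig q (i % q ^ p) t = dig q i t := by
  conv_rhs => rw [← Nat.div_add_mod i (q ^ p)]
  exact (dig_low hq ht _ _).symm

lemma ge_iff_dig {q m s X : ℕ} (hq : 2 ≤ q) (hX : X < q ^ m) :
    q ^ s ≤ X ↔ ∃ t, s ≤ t ∧ t < m ∧ dig q X t ≠ 0 := by
  constructor
  · intro h
    have hX0 : X ≠ 0 := by
      have : 0 < q ^ s := pow_pos (by omega) _
      omega
    refine ⟨Nat.log q X, (Nat.le_log_iff_pow_le (by omega) hX0).mpr h, ?_, ?_⟩
    · exact Nat.log_lt_of_lt_pow hX0 hX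
    · have h1 : q ^ Nat.log q X ≤ X := Nat.pow_log_le_self q hX0
      have h2 : X < q ^ (Nat.log q X + 1) := Nat.lt_pow_succ_log_self (by omega) X
      have h3 : X / q ^ Nat.log q X < q := by
        rw [Nat.div_lt_iff_lt_mul (pow_pos (by omega) _)]
        calc X < q ^ (Nat.log q X + 1) := h2
          _ = q * q ^ Nat.log q X := by rw [pow_succ, mul_comm]
      have h4 : 1 ≤ X / q ^ Nat.log q X := (Nat.one_le_div_iff (pow_pos (by omega) _)).mpr h1
      unfold dig
      rw [Nat.mod_eq_of_lt h3]
      omega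
  · rintro ⟨t, hst, htm, hd⟩
    have h2 : q ^ t ≤ X := by
      by_contra hc
      push_neg at hc
      apply hd
      unfold dig
      rw [Nat.div_eq_of_lt hc, Nat.zero_mod]
    exact le_trans (Nat.pow_le_pow_right (by omega) hst) h2

lemma shift_eq {q m j i : ℕ} (hq : 2 ≤ q) (hj : j ≤ m) (hi : i < q ^ m - 1) :
    i * q ^ j % (q ^ m - 1) = (i % q ^ (m - j)) * q ^ j + i / q ^ (m - j) := by
  set A := q ^ j with hAdef
  set B := q ^ (m - j) with hBdef
  have hA : 0 < A := pow_pos (by omega) _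
  have hB : 0 < B := pow_pos (by omega) _
  have hAB : B * A = q ^ m := by rw [hAdef, hBdef, ← pow_add]; congr 1; omega
  have hqm : 2 ≤ q ^ m := by omega
  set a := i / B with hadef
  set b := i % B with hbdef
  have hia : B * a + b = i := Nat.div_add_mod i B
  have hbB : b < B := Nat.mod_lt _ hB
  have haA : a < A := by
    rw [hadef, Nat.div_lt_iff_lt_mul hB]
    calc i < q ^ m := by omega
      _ = A * B := by rw [← hAB, mul_comm]
  have hlt : b * A + a < q ^ m - 1 := by
    rcases Nat.lt_or_ge (b + 1) B with h | h
    · -- b + 2 ≤ B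
      have h1 : (b + 2) * A ≤ B * A := Nat.mul_le_mul_right A (by omega)
      have h2 : (b + 2) * A = b * A + 2 * A := by ring
      omega
    · have hbB1 : b + 1 = B := by omega
      rcases Nat.lt_or_ge (a + 1) A with h' | h'
      · have h1 : (b + 1) * A = B * A := by rw [hbB1]
        have h2 : (b + 1) * A = b * A + A := by ring
        omega
      · exfalso
        have haA1 : a + 1 = A := by omega
        have h3 : B * a + B = B * A := by rw [← haA1]; ring
        omega
  have hsucc : (q ^ m - 1) + 1 = q ^ m := by omega
  have key : i * A = (q ^ m - 1) * a + (b * A + a) := by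
    calc i * A = (B * a + b) * A := by rw [hia]
      _ = ((q ^ m - 1) + 1) * a + b * A := by rw [hsucc, ← hAB]; ring
      _ = (q ^ m - 1) * a + (b * A + a) := by ring
  rw [key, Nat.mul_add_mod, Nat.mod_eq_of_lt hlt]

lemma dig_shift {q m i : ℕ} (hq : 2 ≤ q) (hi : 0 < i) (hiN : i < q ^ m - 1)
    {j : ℕ} (hj : j < m) {t : ℕ} (ht : t < m) :
    dig q ((i % q ^ (m - j)) * q ^ j + i / q ^ (m - j)) t = dig q i (widx m j t) := by
  set a := i / q ^ (m - j) with hadef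
  set b := i % q ^ (m - j) with hbdef
  have hqm : 2 ≤ q ^ m := by omega
  have haA : a < q ^ j := by
    rw [hadef, Nat.div_lt_iff_lt_mul (pow_pos (by omega) _)]
    calc i < q ^ m := by omega
      _ = q ^ j * q ^ (m - j) := by rw [← pow_add]; congr 1; omega
  rcases Nat.lt_or_ge t j with htj | htj
  · -- t < j : digit comes from a
    have h1 : b * q ^ j + a = q ^ j * b + a := by ring
    rw [h1, dig_low (by omega) htj]
    unfold dig widx
    rw [if_pos htj, Nat.div_div_eq_div_mul, ← pow_add]
  · -- j ≤ t : digit comes from b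
    have hX : (b * q ^ j + a) / q ^ t = b / q ^ (t - j) := by
      have h2 : q ^ t = q ^ j * q ^ (t - j) := by rw [← pow_add]; congr 1; omega
      rw [h2, ← Nat.div_div_eq_div_mul]
      congr 1
      rw [mul_comm b, Nat.mul_add_div (pow_pos (by omega) _), Nat.div_eq_of_lt haA, add_zero]
    unfold dig widx
    rw [hX, if_neg (by omega)]
    have h3 : t - j < m - j := by omega
    have := dig_mod_pow (q := q) (p := m - j) (t := t - j) (by omega) h3 i
    unfold dig at this
    rw [← hbdef] at this
    exact this

lemma cond_iff {q m l i : ℕ} (hq : 2 ≤ q) (hm : 2 ≤ m) (hi : 0 < i) (hiN : i < q ^ m - 1) :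
    (∀ j < m, q ^ (m - l - 1) ≤ i * q ^ j % (q ^ m - 1)) ↔ pat q m l i := by
  unfold pat
  refine forall_congr' fun j => imp_congr_right fun hj => ?_
  rw [shift_eq hq (le_of_lt hj) hiN]
  have hXlt : (i % q ^ (m - j)) * q ^ j + i / q ^ (m - j) < q ^ m := by
    have h1 : (i % q ^ (m - j)) * q ^ j + i / q ^ (m - j) = i * q ^ j % (q ^ m - 1) :=
      (shift_eq hq (le_of_lt hj) hiN).symm
    have h2 : i * q ^ j % (q ^ m - 1) < q ^ m - 1 := Nat.mod_lt _ (by omega)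
    omega
  rw [ge_iff_dig hq hXlt]
  exact exists_congr fun t => and_congr_right fun h1 => and_congr_right fun h2 =>
    not_congr (by rw [dig_shift hq hi hiN hj h2])


/-- replace the leading digit of `i` by `e`. -/
def repl (q i e : ℕ) : ℕ := e * q ^ Nat.log q i + i % q ^ Nat.log q i

def sig (q i : ℕ) : ℕ :=
  repl q i (if i / q ^ Nat.log q i + 1 < q then i / q ^ Nat.log q i + 1 else 1)

def tau (q i : ℕ) : ℕ :=
  repl q i (if 2 ≤ i / q ^ Nat.log q i then i / q ^ Nat.log q i - 1 else q - 1)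

section Repl

variable {q i e t : ℕ}

lemma lead_ge (hq : 2 ≤ q) (hi : 0 < i) : 1 ≤ i / q ^ Nat.log q i :=
  (Nat.one_le_div_iff (pow_pos (by omega) _)).mpr (Nat.pow_log_le_self q (by omega))

lemma lead_lt (hq : 2 ≤ q) (hi : 0 < i) : i / q ^ Nat.log q i < q := by
  rw [Nat.div_lt_iff_lt_mul (pow_pos (by omega) _)]
  calc i < q ^ (Nat.log q i + 1) := Nat.lt_pow_succ_log_self (by omega) i
    _ = q * q ^ Nat.log q i := by rw [pow_succ, mul_comm]

lemma repl_pos (hq : 2 ≤ q) (he : 1 ≤ e) : 0 < repl q i e := by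
  calc 0 < q ^ Nat.log q i := pow_pos (by omega) _
    _ ≤ e * q ^ Nat.log q i := Nat.le_mul_of_pos_left _ (by omega)
    _ ≤ repl q i e := Nat.le_add_right _ _

lemma repl_lt (hq : 2 ≤ q) (he' : e < q) : repl q i e < q ^ (Nat.log q i + 1) := by
  have h1 : i % q ^ Nat.log q i < q ^ Nat.log q i := Nat.mod_lt _ (pow_pos (by omega) _)
  have h2 : repl q i e < (e + 1) * q ^ Nat.log q i := by
    unfold repl
    have h3 : (e + 1) * q ^ Nat.log q i = e * q ^ Nat.log q i + q ^ Nat.log q i := by ring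
    omega
  calc repl q i e < (e + 1) * q ^ Nat.log q i := h2
    _ ≤ q * q ^ Nat.log q i := Nat.mul_le_mul_right _ (by omega)
    _ = q ^ (Nat.log q i + 1) := by rw [pow_succ, mul_comm]

lemma repl_log (hq : 2 ≤ q) (he : 1 ≤ e) (he' : e < q) :
    Nat.log q (repl q i e) = Nat.log q i := by
  refine Nat.log_eq_of_pow_le_of_lt_pow ?_ (repl_lt hq he')
  calc q ^ Nat.log q i = 1 * q ^ Nat.log q i := (one_mul _).symm
    _ ≤ e * q ^ Nat.log q i := Nat.mul_le_mul_right _ he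
    _ ≤ repl q i e := Nat.le_add_right _ _

lemma repl_div (hq : 2 ≤ q) : repl q i e / q ^ Nat.log q i = e := by
  unfold repl
  rw [mul_comm, Nat.mul_add_div (pow_pos (by omega) _),
    Nat.div_eq_of_lt (Nat.mod_lt _ (pow_pos (by omega) _)), add_zero]

lemma repl_mod (hq : 2 ≤ q) : repl q i e % q ^ Nat.log q i = i % q ^ Nat.log q i := by
  unfold repl
  rw [mul_comm, Nat.mul_add_mod, Nat.mod_mod_of_dvd _ dvd_rfl]

lemma repl_dig_ne (hq : 2 ≤ q) (hi : 0 < i) (he' : e < q) (ht : t ≠ Nat.log q i) :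
    dig q (repl q i e) t = dig q i t := by
  rcases Nat.lt_or_ge t (Nat.log q i) with h | h
  · unfold repl
    rw [mul_comm, dig_low (by omega) h, dig_mod_pow (by omega) h]
  · have h' : Nat.log q i < t := by omega
    have h1 : repl q i e < q ^ t :=
      lt_of_lt_of_le (repl_lt hq he') (Nat.pow_le_pow_right (by omega) (by omega))
    have h2 : i < q ^ t :=
      lt_of_lt_of_le (Nat.lt_pow_succ_log_self (by omega) i)
        (Nat.pow_le_pow_right (by omega) (by omega))
    unfold dig
    rw [Nat.div_eq_of_lt h1, Nat.div_eq_of_lt h2]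

lemma repl_dig_log (hq : 2 ≤ q) (he' : e < q) :
    dig q (repl q i e) (Nat.log q i) = e := by
  unfold dig
  rw [repl_div hq, Nat.mod_eq_of_lt he']

lemma dig_log_self (hq : 2 ≤ q) (hi : 0 < i) :
    dig q i (Nat.log q i) = i / q ^ Nat.log q i := by
  unfold dig
  exact Nat.mod_eq_of_lt (lead_lt hq hi)

lemma repl_dig_zero_iff (hq : 2 ≤ q) (hi : 0 < i) (he : 1 ≤ e) (he' : e < q) (t : ℕ) :
    (dig q (repl q i e) t = 0 ↔ dig q i t = 0) := by
  rcases eq_or_ne t (Nat.log q i) with rfl | h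
  · rw [repl_dig_log hq he', dig_log_self hq hi]
    have := lead_ge (q := q) (i := i) hq hi
    constructor <;> intro hh <;> omega
  · rw [repl_dig_ne hq hi he' h]

end Repl


lemma sig_eq (q i : ℕ) :
    sig q i = repl q i (if i / q ^ Nat.log q i + 1 < q then i / q ^ Nat.log q i + 1 else 1) :=
  rfl

lemma tau_eq (q x : ℕ) :
    tau q x = (if 2 ≤ x / q ^ Nat.log q x then x / q ^ Nat.log q x - 1 else q - 1) *
      q ^ Nat.log q x + x % q ^ Nat.log q x := rfl

lemma sig_e_pos (q i : ℕ) :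
    1 ≤ (if i / q ^ Nat.log q i + 1 < q then i / q ^ Nat.log q i + 1 else 1) := by
  split
  · exact Nat.le_add_left 1 _
  · exact le_refl 1

lemma sig_e_lt {q : ℕ} (hq : 2 ≤ q) (i : ℕ) :
    (if i / q ^ Nat.log q i + 1 < q then i / q ^ Nat.log q i + 1 else 1) < q := by
  split
  · assumption
  · omega

lemma sig_pos {q i : ℕ} (hq : 2 ≤ q) : 0 < sig q i := by
  rw [sig_eq]; exact repl_pos hq (sig_e_pos q i)

lemma sig_lt {q i : ℕ} (hq : 2 ≤ q) : sig q i < q ^ (Nat.log q i + 1) := by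
  rw [sig_eq]; exact repl_lt hq (sig_e_lt hq i)

lemma sig_dig_zero_iff {q i : ℕ} (hq : 2 ≤ q) (hi : 0 < i) (t : ℕ) :
    dig q (sig q i) t = 0 ↔ dig q i t = 0 := by
  rw [sig_eq]; exact repl_dig_zero_iff hq hi (sig_e_pos q i) (sig_e_lt hq i) t

lemma tau_sig {q i : ℕ} (hq : 2 ≤ q) (hi : 0 < i) : tau q (sig q i) = i := by
  have hd1 : 1 ≤ i / q ^ Nat.log q i := lead_ge hq hi
  have hd2 : i / q ^ Nat.log q i < q := lead_lt hq hi
  have he := sig_e_pos q i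
  have he' := sig_e_lt hq i
  have hlog : Nat.log q (sig q i) = Nat.log q i := by
    rw [sig_eq]; exact repl_log hq he he'
  have hdiv : sig q i / q ^ Nat.log q i =
      (if i / q ^ Nat.log q i + 1 < q then i / q ^ Nat.log q i + 1 else 1) := by
    conv_lhs => rw [sig_eq]
    exact repl_div hq
  have hmod : sig q i % q ^ Nat.log q i = i % q ^ Nat.log q i := by
    conv_lhs => rw [sig_eq]
    exact repl_mod hq
  rw [tau_eq, hlog, hdiv, hmod]
  have hif : (if 2 ≤ (if i / q ^ Nat.log q i + 1 < q then i / q ^ Nat.log q i + 1 else 1) then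
      (if i / q ^ Nat.log q i + 1 < q then i / q ^ Nat.log q i + 1 else 1) - 1 else q - 1)
      = i / q ^ Nat.log q i := by
    split_ifs <;> omega
  rw [hif, mul_comm]
  exact Nat.div_add_mod i _

lemma tau_e_pos {q i : ℕ} (hq : 2 ≤ q) :
    1 ≤ (if 2 ≤ i / q ^ Nat.log q i then i / q ^ Nat.log q i - 1 else q - 1) := by
  split <;> omega

lemma tau_e_lt {q i : ℕ} (hq : 2 ≤ q) (hi : 0 < i) :
    (if 2 ≤ i / q ^ Nat.log q i then i / q ^ Nat.log q i - 1 else q - 1) < q := by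
  have hd2 : i / q ^ Nat.log q i < q := lead_lt hq hi
  split <;> omega

lemma tau_eq_repl (q i : ℕ) : tau q i = repl q i
    (if 2 ≤ i / q ^ Nat.log q i then i / q ^ Nat.log q i - 1 else q - 1) := rfl

lemma tau_pos {q i : ℕ} (hq : 2 ≤ q) : 0 < tau q i := by
  rw [tau_eq_repl]; exact repl_pos hq (tau_e_pos hq)

lemma tau_lt {q i : ℕ} (hq : 2 ≤ q) (hi : 0 < i) : tau q i < q ^ (Nat.log q i + 1) := by
  rw [tau_eq_repl]; exact repl_lt hq (tau_e_lt hq hi)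

lemma tau_dig_zero_iff {q i : ℕ} (hq : 2 ≤ q) (hi : 0 < i) (t : ℕ) :
    dig q (tau q i) t = 0 ↔ dig q i t = 0 := by
  rw [tau_eq_repl]; exact repl_dig_zero_iff hq hi (tau_e_pos hq) (tau_e_lt hq hi) t

lemma sig_tau {q i : ℕ} (hq : 2 ≤ q) (hi : 0 < i) : sig q (tau q i) = i := by
  have hd1 : 1 ≤ i / q ^ Nat.log q i := lead_ge hq hi
  have hd2 : i / q ^ Nat.log q i < q := lead_lt hq hi
  have he := tau_e_pos (q := q) (i := i) hq
  have he' := tau_e_lt (q := q) (i := i) hq hi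
  have hlog : Nat.log q (tau q i) = Nat.log q i := by
    rw [tau_eq_repl]; exact repl_log hq he he'
  have hdiv : tau q i / q ^ Nat.log q i =
      (if 2 ≤ i / q ^ Nat.log q i then i / q ^ Nat.log q i - 1 else q - 1) := by
    conv_lhs => rw [tau_eq_repl]
    exact repl_div hq
  have hmod : tau q i % q ^ Nat.log q i = i % q ^ Nat.log q i := by
    conv_lhs => rw [tau_eq_repl]
    exact repl_mod hq
  rw [sig_eq, repl, hlog, hdiv, hmod]
  have hif : (if (if 2 ≤ i / q ^ Nat.log q i then i / q ^ Nat.log q i - 1 else q - 1) + 1 < q then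
      (if 2 ≤ i / q ^ Nat.log q i then i / q ^ Nat.log q i - 1 else q - 1) + 1 else 1)
      = i / q ^ Nat.log q i := by
    split_ifs <;> omega
  rw [hif, mul_comm]
  exact Nat.div_add_mod i _

lemma cast_sig {q i lam : ℕ} (hq : 2 ≤ q) (hi : 0 < i) (hlam : lam ∣ q - 1) :
    ((sig q i : ℕ) : ZMod lam) = (i : ZMod lam) + 1 := by
  have h0 : ((q - 1 : ℕ) : ZMod lam) = 0 := (ZMod.natCast_eq_zero_iff _ _).mpr hlam
  have hq1 : ((q : ℕ) : ZMod lam) = 1 := by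
    have h1 : ((q - 1 : ℕ) : ZMod lam) = (q : ZMod lam) - 1 := by
      rw [Nat.cast_sub (by omega : 1 ≤ q), Nat.cast_one]
    rw [h1] at h0
    have := sub_eq_zero.mp h0
    simpa using this
  have hqp : ((q ^ Nat.log q i : ℕ) : ZMod lam) = 1 := by
    push_cast
    rw [hq1, one_pow]
  have hdec : (i : ZMod lam) = ((i / q ^ Nat.log q i : ℕ) : ZMod lam) +
      ((i % q ^ Nat.log q i : ℕ) : ZMod lam) := by
    conv_lhs => rw [← Nat.div_add_mod i (q ^ Nat.log q i)]
    push_cast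
    rw [hq1, one_pow]
    ring
  have hd2 : i / q ^ Nat.log q i < q := lead_lt hq hi
  rw [sig_eq, repl]
  push_cast
  rw [hq1, one_pow, hdec]
  split_ifs with h
  · push_cast
    ring
  · have hd : i / q ^ Nat.log q i = q - 1 := by omega
    rw [hd, h0]
    push_cast
    ring


lemma dig_N {q m t : ℕ} (hq : 2 ≤ q) (ht : t < m) : dig q (q ^ m - 1) t ≠ 0 := by
  have hA : 0 < q ^ t := pow_pos (by omega) _
  have hC : 0 < q ^ (m - t - 1) := pow_pos (by omega) _
  have hAX : q ^ t * (q * q ^ (m - t - 1)) = q ^ m := by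
    calc q ^ t * (q * q ^ (m - t - 1)) = q ^ (t + (1 + (m - t - 1))) := by
          rw [pow_add, pow_add, pow_one]
      _ = q ^ m := by congr 1; omega
  have hX2 : q ≤ q * q ^ (m - t - 1) := Nat.le_mul_of_pos_right q hC
  have hmul : q ^ t * (q * q ^ (m - t - 1) - 1) + q ^ t = q ^ t * (q * q ^ (m - t - 1)) := by
    have hx : q * q ^ (m - t - 1) - 1 + 1 = q * q ^ (m - t - 1) := by omega
    calc q ^ t * (q * q ^ (m - t - 1) - 1) + q ^ t
        = q ^ t * ((q * q ^ (m - t - 1) - 1) + 1) := by ring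
      _ = q ^ t * (q * q ^ (m - t - 1)) := by rw [hx]
  have hdecomp : q ^ m - 1 = q ^ t * (q * q ^ (m - t - 1) - 1) + (q ^ t - 1) := by omega
  unfold dig
  rw [hdecomp, Nat.mul_add_div hA, Nat.div_eq_of_lt (by omega), add_zero]
  have hmul2 : q * (q ^ (m - t - 1) - 1) + q = q * q ^ (m - t - 1) := by
    have hx : q ^ (m - t - 1) - 1 + 1 = q ^ (m - t - 1) := by omega
    calc q * (q ^ (m - t - 1) - 1) + q = q * ((q ^ (m - t - 1) - 1) + 1) := by ring
      _ = q * q ^ (m - t - 1) := by rw [hx]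
  have hdecomp2 : q * q ^ (m - t - 1) - 1 = q * (q ^ (m - t - 1) - 1) + (q - 1) := by omega
  rw [hdecomp2, Nat.mul_add_mod, Nat.mod_eq_of_lt (by omega)]
  omega

lemma pat_N {q m l : ℕ} (hq : 2 ≤ q) (hm : 1 ≤ m) : pat q m l (q ^ m - 1) := by
  intro j hj
  refine ⟨m - 1, by omega, by omega, ?_⟩
  apply dig_N hq
  unfold widx
  split <;> omega


end Stmt13

open Stmt13 in
/-- |S_{ℓ,λ}| = |S_{ℓ,1}| / λ, where S_{ℓ,λ} is the set of
1 ≤ i ≤ q^m-1 divisible by λ whose digit vector has maximal circular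
zero-run ≤ ℓ (i.e. every cyclic shift is ≥ q^(m-ℓ-1)). -/
theorem stmt13 (q m lam l : ℕ)
    (hq : 2 ≤ q) (hm : 2 ≤ m) (hlam1 : 1 ≤ lam) (hlam : lam ∣ q - 1)
    (hl : l ≤ m - 2) :
    ((Finset.Icc 1 (q ^ m - 1)).filter
        (fun i => lam ∣ i ∧
          ∀ j < m, q ^ (m - l - 1) ≤ i * q ^ j % (q ^ m - 1))).card =
      ((Finset.Icc 1 (q ^ m - 1)).filter
        (fun i => ∀ j < m, q ^ (m - l - 1) ≤ i * q ^ j % (q ^ m - 1))).card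
        / lam := by
  classical
  have hNZ : NeZero lam := ⟨by omega⟩
  have hqm : 4 ≤ q ^ m := by
    have h1 : 2 ^ 2 ≤ q ^ 2 := Nat.pow_le_pow_left hq 2
    have h2 : q ^ 2 ≤ q ^ m := Nat.pow_le_pow_right (by omega) hm
    omega
  have hKpos : 0 < q ^ (m - l - 1) := pow_pos (by omega) _
  set N := q ^ m - 1 with hN
  have hN1 : 1 ≤ N := by omega
  set Sstar := (Finset.Icc 1 N).filter (fun i => pat q m l i) with hSstar
  set F : ZMod lam → Finset ℕ := fun r => Sstar.filter (fun i => (i : ZMod lam) = r) with hF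
  -- the defective element N
  have hCN : ¬ (∀ j < m, q ^ (m - l - 1) ≤ N * q ^ j % N) := by
    intro h
    have h0 := h 0 (by omega)
    rw [pow_zero, mul_one, Nat.mod_self] at h0
    omega
  have hdvdN : lam ∣ N := hlam.trans (by simpa using Nat.sub_dvd_pow_sub_pow q 1 m)
  have hNSstar : N ∈ Sstar := by
    rw [hSstar]
    simp only [Finset.mem_filter, Finset.mem_Icc]
    exact ⟨⟨hN1, le_refl N⟩, pat_N hq (by omega)⟩
  have hNF0 : N ∈ F 0 := by
    rw [hF]
    simp only [Finset.mem_filter]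
    exact ⟨hNSstar, (ZMod.natCast_eq_zero_iff N lam).mpr hdvdN⟩
  -- rewrite the two sets
  have hS : (Finset.Icc 1 N).filter
      (fun i => ∀ j < m, q ^ (m - l - 1) ≤ i * q ^ j % (q ^ m - 1)) = Sstar.erase N := by
    ext i
    rw [hSstar]
    simp only [Finset.mem_erase, Finset.mem_filter, Finset.mem_Icc, ← hN]
    constructor
    · rintro ⟨⟨h1, h2⟩, h3⟩
      have hiN : i ≠ N := by
        rintro rfl
        exact hCN h3
      exact ⟨hiN, ⟨h1, h2⟩, (cond_iff hq hm (by omega) (by omega)).mp h3⟩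
    · rintro ⟨hne, ⟨h1, h2⟩, h3⟩
      have hi2 : i < N := by omega
      exact ⟨⟨h1, h2⟩, (cond_iff hq hm (by omega) (by omega)).mpr h3⟩
  have hT : (Finset.Icc 1 N).filter
      (fun i => lam ∣ i ∧ ∀ j < m, q ^ (m - l - 1) ≤ i * q ^ j % (q ^ m - 1))
      = (F 0).erase N := by
    ext i
    rw [hF]
    simp only [Finset.mem_erase, Finset.mem_filter, Finset.mem_Icc, ← hN, hSstar]
    constructor
    · rintro ⟨⟨h1, h2⟩, hdvd, h3⟩
      have hiN : i ≠ N := by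
        rintro rfl
        exact hCN h3
      exact ⟨hiN, ⟨⟨h1, h2⟩, (cond_iff hq hm (by omega) (by omega)).mp h3⟩,
        (ZMod.natCast_eq_zero_iff i lam).mpr hdvd⟩
    · rintro ⟨hne, ⟨⟨h1, h2⟩, h3⟩, h4⟩
      have hi2 : i < N := by omega
      exact ⟨⟨h1, h2⟩, (ZMod.natCast_eq_zero_iff i lam).mp h4,
        (cond_iff hq hm (by omega) (by omega)).mpr h3⟩
  -- membership facts
  have hmemS : ∀ i ∈ Sstar, 0 < i ∧ i ≤ N ∧ pat q m l i := by
    intro i hi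
    rw [hSstar] at hi
    simp only [Finset.mem_filter, Finset.mem_Icc] at hi
    exact ⟨by omega, hi.1.2, hi.2⟩
  have hlogm : ∀ i : ℕ, 0 < i → i ≤ N → Nat.log q i + 1 ≤ m := by
    intro i h1 h2
    have : i < q ^ m := by omega
    have := Nat.log_lt_of_lt_pow (by omega : i ≠ 0) this
    omega
  have hsigS : ∀ i ∈ Sstar, sig q i ∈ Sstar := by
    intro i hi
    obtain ⟨h1, h2, hp⟩ := hmemS i hi
    rw [hSstar]
    simp only [Finset.mem_filter, Finset.mem_Icc]
    refine ⟨⟨sig_pos hq, ?_⟩, ?_⟩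
    · have hlt : sig q i < q ^ (Nat.log q i + 1) := sig_lt hq
      have hle : q ^ (Nat.log q i + 1) ≤ q ^ m :=
        Nat.pow_le_pow_right (by omega) (hlogm i h1 h2)
      omega
    · intro j hj
      obtain ⟨t, ht1, ht2, ht3⟩ := hp j hj
      exact ⟨t, ht1, ht2, fun h => ht3 ((sig_dig_zero_iff hq h1 _).mp h)⟩
  have htauS : ∀ i ∈ Sstar, tau q i ∈ Sstar := by
    intro i hi
    obtain ⟨h1, h2, hp⟩ := hmemS i hi
    rw [hSstar]
    simp only [Finset.mem_filter, Finset.mem_Icc]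
    refine ⟨⟨tau_pos hq, ?_⟩, ?_⟩
    · have hlt : tau q i < q ^ (Nat.log q i + 1) := tau_lt hq h1
      have hle : q ^ (Nat.log q i + 1) ≤ q ^ m :=
        Nat.pow_le_pow_right (by omega) (hlogm i h1 h2)
      omega
    · intro j hj
      obtain ⟨t, ht1, ht2, ht3⟩ := hp j hj
      exact ⟨t, ht1, ht2, fun h => ht3 ((tau_dig_zero_iff hq h1 _).mp h)⟩
  have cast_tau : ∀ i : ℕ, 0 < i → ((tau q i : ℕ) : ZMod lam) = (i : ZMod lam) - 1 := by
    intro i hi0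
    have h1 := cast_sig (q := q) (i := tau q i) hq (tau_pos hq) hlam
    rw [sig_tau hq hi0] at h1
    exact eq_sub_of_add_eq h1.symm
  -- all fibers have the same cardinality
  have hfib : ∀ r : ZMod lam, (F r).card = (F (r + 1)).card := by
    intro r
    apply Finset.card_bij' (fun i _ => sig q i) (fun i _ => tau q i)
    · intro a ha
      rw [hF] at ha ⊢
      simp only [Finset.mem_filter] at ha ⊢
      obtain ⟨haS, har⟩ := ha
      refine ⟨hsigS a haS, ?_⟩
      rw [cast_sig hq (hmemS a haS).1 hlam, har]
    · intro b hb
      rw [hF] at hb ⊢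
      simp only [Finset.mem_filter] at hb ⊢
      obtain ⟨hbS, hbr⟩ := hb
      refine ⟨htauS b hbS, ?_⟩
      rw [cast_tau b (hmemS b hbS).1, hbr]
      ring
    · intro a ha
      rw [hF] at ha
      simp only [Finset.mem_filter] at ha
      exact tau_sig hq (hmemS a ha.1).1
    · intro b hb
      rw [hF] at hb
      simp only [Finset.mem_filter] at hb
      exact sig_tau hq (hmemS b hb.1).1
  have hconstN : ∀ n : ℕ, (F (n : ZMod lam)).card = (F 0).card := by
    intro n
    induction n with
    | zero => rw [Nat.cast_zero]
    | succ k ih =>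
      rw [Nat.cast_add, Nat.cast_one, ← hfib]
      exact ih
  have hconst : ∀ r : ZMod lam, (F r).card = (F 0).card := by
    intro r
    obtain ⟨n, rfl⟩ := ZMod.natCast_zmod_surjective (n := lam) r
    exact hconstN n
  have hsum : Sstar.card = ∑ r : ZMod lam, (F r).card := by
    rw [hF]
    exact Finset.card_eq_sum_card_fiberwise (fun x _ => Finset.mem_univ _)
  have hcard : Sstar.card = lam * (F 0).card := by
    rw [hsum, Finset.sum_congr rfl (fun r _ => hconst r), Finset.sum_const,
      Finset.card_univ, ZMod.card, smul_eq_mul]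
  have hg1 : 1 ≤ (F 0).card := Finset.card_pos.mpr ⟨N, hNF0⟩
  rw [hS, hT, Finset.card_erase_of_mem hNF0, Finset.card_erase_of_mem hNSstar, hcard]
  obtain ⟨G, hG⟩ : ∃ G, (F 0).card = G + 1 := ⟨(F 0).card - 1, by omega⟩
  rw [hG]
  have hexp : lam * (G + 1) - 1 = lam * G + (lam - 1) := by
    have : lam * (G + 1) = lam * G + lam := by ring
    omega
  rw [hexp, Nat.mul_add_div (by omega), Nat.div_eq_of_lt (by omega), add_zero]
  omega
end

section
/- Let q ≥ 2, m ≥ 2, λ | (q-1), δ = ((q - λℓ₀)q^(m-1-ℓ₁) - 1)/λ with ℓ₁ = m-1 and 0 ≤ ℓ₀ ≤ (q-1)/λ - 2, so that δ = ((q-λℓ₀)-1)/λ. Then the number of integers 1 ≤ i ≤ δ-1 with i not divisible by q equals (q-1)/λ - 1 - ℓ₀, and each such i is a q-cyclotomic coset leader modulo n = (q^m-1)/λ with coset size m. -/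
/-- case ℓ₁ = m-1.  The number of 1 ≤ i ≤ δ-1 with q ∤ i is
(q-1)/λ - 1 - ℓ₀, and each such i is a q-cyclotomic coset leader modulo
n = (q^m-1)/λ with coset size m. -/
theorem stmt15 (q m lam l0 δ : ℕ)
    (hq : 2 ≤ q) (hm : 2 ≤ m) (hlam1 : 1 ≤ lam) (hlam : lam ∣ q - 1)
    (hl0 : l0 + 2 ≤ (q - 1) / lam)
    (hδ : lam * δ = (q - lam * l0) - 1) :
    ((Finset.Icc 1 (δ - 1)).filter (fun i => ¬ q ∣ i)).card =
      (q - 1) / lam - 1 - l0 ∧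
    ∀ i, 1 ≤ i → i ≤ δ - 1 → ¬ q ∣ i →
      (∀ j, i ≤ i * q ^ j % ((q ^ m - 1) / lam)) ∧
      ((Finset.range m).image
        fun j => i * q ^ j % ((q ^ m - 1) / lam)).card = m := by
  have hq1 : lam * ((q - 1) / lam) = q - 1 := Nat.mul_div_cancel' hlam
  have hkey : lam * (l0 + 2) ≤ q - 1 := by
    calc lam * (l0 + 2) ≤ lam * ((q - 1) / lam) :=
          Nat.mul_le_mul_left lam hl0
      _ = q - 1 := hq1
  have hkey' : lam * l0 + lam * 2 ≤ q - 1 := by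
    rw [← Nat.mul_add]; exact hkey
  have hδval : lam * δ + lam * l0 = q - 1 := by omega
  have hδeq : δ + l0 = (q - 1) / lam := by
    have : lam * (δ + l0) = lam * ((q - 1) / lam) := by
      rw [hq1, Nat.mul_add]; omega
    exact Nat.eq_of_mul_eq_mul_left (by omega) this
  have hdivle : (q - 1) / lam ≤ q - 1 := Nat.div_le_self _ _
  have hδq : δ < q := by omega
  constructor
  · rw [Finset.filter_true_of_mem (fun i hi => ?_), Nat.card_Icc]
    · omega
    · simp only [Finset.mem_Icc] at hi
      exact Nat.not_dvd_of_pos_of_lt (by omega) (by omega)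
  · intro i hi1 hi2 _
    set n := (q ^ m - 1) / lam with hn
    have hdvd : lam ∣ q ^ m - 1 := by
      refine hlam.trans ?_
      have := Nat.sub_dvd_pow_sub_pow q 1 m
      simpa using this
    have hln : lam * n = q ^ m - 1 := Nat.mul_div_cancel' hdvd
    have hqm : 1 ≤ q ^ m := Nat.one_le_pow _ _ (by omega)
    have hiq : lam * i ≤ q - 1 := by
      have : lam * i ≤ lam * δ := Nat.mul_le_mul_left lam (by omega)
      omega
    -- key inequality: for j < m, i * q^j < n
    have hlt : ∀ j, j < m → i * q ^ j < n := by
      intro j hj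
      have ha : q ≤ q ^ (m - 1) := by
        calc q = q ^ 1 := (pow_one q).symm
          _ ≤ q ^ (m - 1) := Nat.pow_le_pow_right (by omega) (by omega)
      have hB : q ^ m = q * q ^ (m - 1) := by
        rw [← pow_succ']
        congr 1
        omega
      have h1 : lam * (i * q ^ j) ≤ (q - 1) * q ^ (m - 1) := by
        rw [← Nat.mul_assoc]
        exact Nat.mul_le_mul hiq (Nat.pow_le_pow_right (by omega) (by omega))
      have h2 : (q - 1) * q ^ (m - 1) + q ^ (m - 1) = q * q ^ (m - 1) := by
        rw [Nat.sub_mul]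
        have : q ^ (m - 1) ≤ q * q ^ (m - 1) :=
          Nat.le_mul_of_pos_left _ (by omega)
        omega
      have h3 : lam * (i * q ^ j) < lam * n := by omega
      exact Nat.lt_of_mul_lt_mul_left h3
    have hmod : ∀ j, j < m → i * q ^ j % n = i * q ^ j := fun j hj =>
      Nat.mod_eq_of_lt (hlt j hj)
    have hn1 : 1 < n := by
      have := hlt 0 (by omega)
      simp at this
      omega
    have hmeq : (q ^ m : ℕ) ≡ 1 [MOD n] := by
      have : q ^ m % n = 1 % n := by
        have h4 : q ^ m = lam * n + 1 := by omega
        rw [h4, Nat.add_comm, Nat.mul_comm lam n, Nat.add_mul_mod_self_left]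
      exact this
    have hgen : ∀ j, i * q ^ j % n = i * q ^ (j % m) := by
      intro j
      have hc : i * q ^ j ≡ i * q ^ (j % m) [MOD n] := by
        have h5 : i * q ^ j = i * ((q ^ m) ^ (j / m) * q ^ (j % m)) := by
          rw [← pow_mul, ← pow_add, Nat.div_add_mod]
        rw [h5]
        calc i * ((q ^ m) ^ (j / m) * q ^ (j % m))
            ≡ i * (1 ^ (j / m) * q ^ (j % m)) [MOD n] :=
              Nat.ModEq.mul_left i (Nat.ModEq.mul_right _ (hmeq.pow _))
          _ = i * q ^ (j % m) := by rw [one_pow, one_mul]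
      rw [hc, hmod _ (Nat.mod_lt _ (by omega))]
    constructor
    · intro j
      rw [hgen j]
      exact Nat.le_mul_of_pos_right i (Nat.pow_pos (by omega))
    · rw [Finset.card_image_of_injOn, Finset.card_range]
      intro a ha b hb hab
      simp only [Finset.coe_range, Set.mem_Iio] at ha hb
      simp only at hab
      rw [hmod a ha, hmod b hb] at hab
      have : q ^ a = q ^ b := Nat.eq_of_mul_eq_mul_left (by omega) hab
      exact Nat.pow_right_injective hq this
end

section
/- Let q ≥ 2, m ≥ 2, λ | (q-1), ⌈(m-1)/2⌉ ≤ ℓ₁ ≤ m-2, 0 ≤ ℓ₀ < (q-1)/λ, and δ = ((q - λℓ₀)q^(m-1-ℓ₁) - 1)/λ. Then δ - 1 - ⌊(δ-1)/q⌋ = ((q-1)/λ)(q - λℓ₀)q^(m-2-ℓ₁) - 1. -/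
lemma stmt16_aux (lam k : ℕ) : ∀ n : ℕ, ∃ t, (lam * k + 1) ^ n = lam * t + 1 := by
  intro n
  induction n with
  | zero => exact ⟨0, by simp⟩
  | succ n ih =>
    obtain ⟨t, ht⟩ := ih
    exact ⟨lam * t * k + t + k, by rw [pow_succ, ht]; ring⟩

/-- δ - 1 - ⌊(δ-1)/q⌋ = ((q-1)/λ)(q-λℓ₀)q^(m-2-ℓ₁) - 1. -/
theorem stmt16 (q m lam l0 l1 δ : ℕ)
    (hq : 2 ≤ q) (hm : 2 ≤ m) (hlam1 : 1 ≤ lam) (hlam : lam ∣ q - 1)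
    (hl1lo : (m - 1 + 1) / 2 ≤ l1) (hl1hi : l1 ≤ m - 2)
    (hl0 : l0 < (q - 1) / lam)
    (hδ : lam * δ = (q - lam * l0) * q ^ (m - 1 - l1) - 1) :
    δ - 1 - (δ - 1) / q =
      ((q - 1) / lam) * (q - lam * l0) * q ^ (m - 2 - l1) - 1 := by
  obtain ⟨k, hk⟩ := hlam
  have hqk : q = lam * k + 1 := by rw [← hk]; omega
  have hk1 : 1 ≤ k := by
    have h0 : 0 < lam * k := by rw [← hk]; omega
    rcases Nat.eq_zero_or_pos k with h | h
    · subst h; simp at h0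
    · exact h
  have hkq : k < q := by
    have h1 : k ≤ lam * k := Nat.le_mul_of_pos_left k (by omega)
    rw [← hk] at h1
    omega
  have hdivk : (q - 1) / lam = k := by
    rw [hk, Nat.mul_div_cancel_left _ (by omega : 0 < lam)]
  have hl0' : l0 < k := hdivk ▸ hl0
  set s := k - l0 with hs_def
  have hs : l0 + s = k := by omega
  have hs1 : 1 ≤ s := by omega
  have hA : q - lam * l0 = lam * s + 1 := by
    have h1 : q = lam * l0 + (lam * s + 1) := by rw [hqk, ← hs]; ring
    rw [h1]; simp
  have he : m - 1 - l1 = (m - 2 - l1) + 1 := by omega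
  obtain ⟨t, ht⟩ : ∃ t, q ^ (m - 2 - l1) = lam * t + 1 := by
    rw [hqk]; exact stmt16_aux lam k _
  have hpos : 1 ≤ (q - lam * l0) * q ^ (m - 1 - l1) := by
    rw [hA]; exact Nat.one_le_iff_ne_zero.mpr (by positivity)
  have h5 : lam * δ + 1 = (q - lam * l0) * q ^ (m - 1 - l1) := by
    rw [hδ, Nat.sub_add_cancel hpos]
  have hδfull : lam * δ + 1 = (lam * s + 1) * ((lam * t + 1) * q) := by
    rw [h5, hA, he, pow_succ, ht]
  have h6 : lam * δ + 1 = lam * ((s * lam * t + s + t) * q + k) + 1 := by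
    rw [hδfull, hqk]; ring
  have hδ2 : δ = (s * lam * t + s + t) * q + k :=
    Nat.eq_of_mul_eq_mul_left (by omega) (Nat.add_right_cancel h6)
  have hprod : (q - lam * l0) * q ^ (m - 2 - l1) = lam * (s * lam * t + s + t) + 1 := by
    rw [hA, ht]; ring
  have hR : ((q - 1) / lam) * (q - lam * l0) * q ^ (m - 2 - l1)
      = lam * k * (s * lam * t + s + t) + k := by
    rw [hdivk, mul_assoc, hprod]; ring
  generalize hd : s * lam * t + s + t = d at hδ2 hR
  have hdiv : (δ - 1) / q = d := by
    rw [hδ2]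
    have h4 : d * q + k - 1 = (k - 1) + d * q := by
      set D := d * q with hD
      omega
    rw [h4, Nat.add_mul_div_right _ _ (by omega : 0 < q),
      Nat.div_eq_of_lt (by omega : k - 1 < q)]
    omega
  rw [hdiv, hR]
  have hE : δ = lam * k * d + d + k := by rw [hδ2, hqk]; ring
  set E := lam * k * d with hE2
  omega
end
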